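/- arXiv:1611.07238 — 10 statements merged into one kernel-verified Lean document; each statement's English description precedes it below -/
import Mathlib

section
/- Let n ≥ 1 be a natural number and let u : ℕ → ℝ satisfy u 0 = 0, u k = 1 + (k/n)·u (k-1) + ((n-k)/n)·u (k+1) for every k with 1 ≤ k ≤ n-1, and u n = 1 + u (n-1). Then u n = 2^(n-1) · ∑_{k=0}^{n-1} 1 / C(n-1, k). -/
theorem stmt_0 (n : ℕ) (hn : 1 ≤ n) (u : ℕ → ℝ)
    (h0 : u 0 = 0)
    (hrec : ∀ k, 1 ≤ k → k ≤ n - 1 →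
      u k = 1 + ((k : ℝ) / n) * u (k - 1) + (((n : ℝ) - k) / n) * u (k + 1))
    (hn' : u n = 1 + u (n - 1)) :
    u n = 2 ^ (n - 1) * ∑ k ∈ Finset.range n, 1 / ((n - 1).choose k : ℝ) := by
  obtain ⟨m, rfl⟩ : ∃ m, n = m + 1 := ⟨n - 1, (Nat.succ_pred_eq_of_pos hn).symm⟩
  simp only [Nat.add_sub_cancel] at hrec hn' ⊢
  set T : ℕ → ℝ := fun k => ∑ i ∈ Finset.range (m + 2 - k), ((m+1).choose (k + i) : ℝ) with hTdef
  -- Key downward induction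
  have key : ∀ i, i ≤ m → ((m.choose (m - i) : ℝ)) * (u (m - i + 1) - u (m - i)) = T (m - i + 1) := by
    intro i
    induction i with
    | zero =>
      intro _
      simp only [Nat.sub_zero, Nat.choose_self, Nat.cast_one, one_mul, hTdef]
      have h1 : m + 2 - (m + 1) = 1 := by omega
      rw [h1]
      simp [hn']
    | succ i ih =>
      intro hi
      set j := m - (i + 1) with hj
      have hji : m - i = j + 1 := by omega
      have hjm : j ≤ m := by omega
      have ih' : ((m.choose (j+1) : ℝ)) * (u (j + 2) - u (j + 1)) = T (j + 2) := by
        have h := ih (by omega)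
        rw [hji] at h
        convert h using 3
      have hrecj := hrec (j + 1) (by omega) (by omega)
      simp only [Nat.add_sub_cancel] at hrecj
      have hm1 : ((m : ℝ) + 1) ≠ 0 := by positivity
      have hj1 : ((j : ℝ) + 1) ≠ 0 := by positivity
      have e1 : ((m:ℝ)+1) * u (j+1) = ((m:ℝ)+1) + ((j:ℝ)+1) * u j + ((m:ℝ)-(j:ℝ)) * u (j+2) := by
        have h := hrecj
        push_cast at h
        field_simp at h
        linarith [h]
      have f1 : ((m:ℝ) - (j:ℝ)) * (m.choose j : ℝ) = ((j:ℝ)+1) * (m.choose (j+1) : ℝ) := by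
        have hc : ((m.choose (j+1) * (j+1) : ℕ) : ℝ) = ((m.choose j * (m - j) : ℕ) : ℝ) := by
          exact_mod_cast Nat.choose_succ_right_eq m j
        push_cast [Nat.cast_sub hjm] at hc
        linarith
      have f2 : ((m:ℝ)+1) * (m.choose j : ℝ) = ((j:ℝ)+1) * ((m+1).choose (j+1) : ℝ) := by
        have hc : (((m+1) * m.choose j : ℕ) : ℝ) = (((m+1).choose (j+1) * (j+1) : ℕ) : ℝ) := by
          exact_mod_cast Nat.add_one_mul_choose_eq m j
        push_cast at hc
        linarith
      have f3 : T (j + 1) = ((m+1).choose (j+1) : ℝ) + T (j + 2) := by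
        simp only [hTdef]
        have h1 : m + 2 - (j + 1) = (m - j) + 1 := by omega
        have h2 : m + 2 - (j + 2) = m - j := by omega
        rw [h1, h2, Finset.sum_range_succ']
        rw [add_comm]
        congr 1
        · apply Finset.sum_congr rfl
          intro x _
          congr 2
          omega
      have goal' : ((j:ℝ)+1) * (((m.choose j : ℝ)) * (u (j + 1) - u j)) = ((j:ℝ)+1) * T (j + 1) := by
        rw [f3]
        linear_combination ((m.choose j : ℝ)) * e1 + (u (j+2) - u (j+1)) * f1 + f2 + ((j:ℝ)+1) * ih'
      have h := mul_left_cancel₀ hj1 goal'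
      convert h using 3
  -- every step
  have step : ∀ j, j ≤ m → u (j + 1) - u j = T (j + 1) / (m.choose j : ℝ) := by
    intro j hjm
    have hc : (m.choose j : ℝ) ≠ 0 := Nat.cast_ne_zero.mpr (Nat.choose_pos hjm).ne'
    have hk := key (m - j) (by omega)
    have hmj : m - (m - j) = j := by omega
    rw [hmj] at hk
    field_simp
    linarith [hk]
  -- telescoping
  have tele : u (m + 1) = ∑ j ∈ Finset.range (m + 1), (u (j + 1) - u j) := by
    rw [Finset.sum_range_sub u (m + 1), h0, sub_zero]
  rw [tele,
    Finset.sum_congr rfl (fun j hj => step j (Nat.lt_succ_iff.mp (Finset.mem_range.mp hj)))]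
  -- T-sum pairing
  have Tsum : ∀ j, j ≤ m → T (j + 1) + T (m + 1 - j) = 2 ^ (m + 1) := by
    intro j hjm
    have h1 : m + 2 - (j + 1) = m + 1 - j := by omega
    have h2 : m + 2 - (m + 1 - j) = j + 1 := by omega
    simp only [hTdef, h1, h2]
    have refl2 : (∑ i ∈ Finset.range (j + 1), (((m+1).choose (m + 1 - j + i)) : ℝ))
        = ∑ i ∈ Finset.range (j + 1), (((m+1).choose i) : ℝ) := by
      rw [← Finset.sum_range_reflect (fun i => (((m+1).choose i) : ℝ)) (j+1)]
      apply Finset.sum_congr rfl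
      intro x hx
      have hx' : x ≤ j := Nat.lt_succ_iff.mp (Finset.mem_range.mp hx)
      have e : m + 1 - j + x = m + 1 - (j + 1 - 1 - x) := by omega
      rw [e, Nat.choose_symm (by omega)]
    rw [refl2, add_comm]
    have hsplit : m + 2 = (j + 1) + (m + 1 - j) := by omega
    have := Finset.sum_range_add (fun i => (((m+1).choose i) : ℝ)) (j + 1) (m + 1 - j)
    rw [← hsplit] at this
    rw [← this]
    rw [show m + 2 = (m + 1) + 1 from rfl]
    rw [← Nat.cast_sum]
    rw [Nat.sum_range_choose]
    push_cast
    ring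
  -- symmetry of the main sum
  have S2 : (∑ j ∈ Finset.range (m+1), T (j+1) / (m.choose j : ℝ))
      = ∑ j ∈ Finset.range (m+1), T (m+1-j) / (m.choose j : ℝ) := by
    rw [← Finset.sum_range_reflect (fun j => T (j+1) / (m.choose j : ℝ)) (m+1)]
    apply Finset.sum_congr rfl
    intro x hx
    have hx' : x ≤ m := Nat.lt_succ_iff.mp (Finset.mem_range.mp hx)
    have e1 : m + 1 - 1 - x = m - x := by omega
    have e2 : m - x + 1 = m + 1 - x := by omega
    rw [e1, e2, Nat.choose_symm hx']
  have twoS : 2 * (∑ j ∈ Finset.range (m+1), T (j+1) / (m.choose j : ℝ))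
      = 2 ^ (m+1) * ∑ k ∈ Finset.range (m+1), 1 / (m.choose k : ℝ) := by
    rw [two_mul]
    nth_rewrite 2 [S2]
    rw [← Finset.sum_add_distrib, Finset.mul_sum]
    apply Finset.sum_congr rfl
    intro x hx
    have hx' : x ≤ m := Nat.lt_succ_iff.mp (Finset.mem_range.mp hx)
    rw [← add_div, Tsum x hx']
    ring
  have h2 : (2:ℝ) ^ (m+1) = 2 * 2 ^ m := by ring
  rw [h2] at twoS
  linarith [twoS]
end

section
/- Let n ≥ 1 be a natural number and let v : ℕ → ℝ satisfy v (n-1) = 1 and v (k-1) = ((n-k)/k)·v k + n/k for every k with 1 ≤ k ≤ n-1. Then for every k with 1 ≤ k ≤ n, v (n-k) = (∑_{i=0}^{k-1} C(n, i)) / C(n-1, k-1). -/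
theorem stmt_1 (n : ℕ) (hn : 1 ≤ n) (v : ℕ → ℝ)
    (hlast : v (n - 1) = 1)
    (hrec : ∀ k, 1 ≤ k → k ≤ n - 1 →
      v (k - 1) = (((n : ℝ) - k) / k) * v k + (n : ℝ) / k) :
    ∀ k, 1 ≤ k → k ≤ n →
      v (n - k) = (∑ i ∈ Finset.range k, (n.choose i : ℝ)) / ((n - 1).choose (k - 1) : ℝ) := by
  intro k
  induction k with
  | zero => intro h; omega
  | succ k ih =>
    intro _ hkn
    rcases Nat.eq_zero_or_pos k with rfl | hk
    · simp [hlast]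
    · have hkn' : k ≤ n - 1 := by omega
      have ihv := ih hk (by omega)
      have hr := hrec (n - k) (by omega) (by omega)
      have hcast : ((n - k : ℕ) : ℝ) = (n : ℝ) - k := by
        push_cast [Nat.cast_sub (by omega : k ≤ n)]; ring
      rw [hcast] at hr
      have h1 : n - (k + 1) = n - k - 1 := by omega
      rw [h1, hr, ihv]
      have e1 : k * (n-1).choose k = (n-1).choose (k-1) * (n - k) := by
        have h := Nat.choose_succ_right_eq (n-1) (k-1)
        rw [show k - 1 + 1 = k from by omega, show n - 1 - (k-1) = n - k from by omega] at h
        rw [mul_comm]; exact h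
      have e2 : n * (n-1).choose k = n.choose k * (n - k) := by
        have h := Nat.add_one_mul_choose_eq (n-1) k
        rw [show n - 1 + 1 = n from by omega] at h
        rw [h, Nat.choose_succ_right_eq]
      have e1r : (k : ℝ) * ((n-1).choose k : ℝ) = ((n-1).choose (k-1) : ℝ) * ((n : ℝ) - k) := by
        have := congrArg (Nat.cast : ℕ → ℝ) e1
        push_cast at this
        rw [← hcast]; linarith [this]
      have e2r : (n : ℝ) * ((n-1).choose k : ℝ) = (n.choose k : ℝ) * ((n : ℝ) - k) := by
        have := congrArg (Nat.cast : ℕ → ℝ) e2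
        push_cast at this
        rw [← hcast]; linarith [this]
      have ha : ((n-1).choose (k-1) : ℝ) ≠ 0 := by
        exact_mod_cast Nat.cast_ne_zero.mpr (Nat.choose_pos (by omega : k - 1 ≤ n - 1)).ne'
      have hb : ((n-1).choose k : ℝ) ≠ 0 := by
        exact_mod_cast Nat.cast_ne_zero.mpr (Nat.choose_pos hkn').ne'
      have hD : (n : ℝ) - k ≠ 0 := by
        rw [← hcast]
        exact_mod_cast Nat.cast_ne_zero.mpr (by omega : n - k ≠ 0)
      have hDk : ((n : ℝ) - ((n : ℝ) - k)) = k := by ring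
      rw [show k + 1 - 1 = k from rfl, Finset.sum_range_succ, hDk]
      have t1 : (k:ℝ)/((n:ℝ)-k) * ((∑ i ∈ Finset.range k, (n.choose i : ℝ)) / ((n-1).choose (k-1) : ℝ)) = (∑ i ∈ Finset.range k, (n.choose i : ℝ)) / ((n-1).choose k : ℝ) := by
        rw [div_mul_div_comm, div_eq_div_iff (mul_ne_zero hD ha) hb]
        linear_combination (∑ i ∈ Finset.range k, (n.choose i : ℝ)) * e1r
      have t2 : (n:ℝ)/((n:ℝ)-k) = (n.choose k : ℝ) / ((n-1).choose k : ℝ) := by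
        rw [div_eq_div_iff hD hb]
        linear_combination e2r
      rw [t1, t2, ← add_div]
end

section
/- For every natural number n ≥ 1, ∑_{k=0}^{n-1} (∑_{i=0}^{k} C(n, i)) / C(n-1, k) = 2^(n-1) · ∑_{k=0}^{n-1} 1 / C(n-1, k). -/
lemma aux_choose_sum (n : ℕ) : ∀ k, k < n →
    (∑ i ∈ Finset.range (k + 1), n.choose i) +
      ∑ i ∈ Finset.range (n - k), n.choose i = 2 ^ n := by
  intro k hk
  induction k with
  | zero =>
    have h := Nat.sum_range_choose n
    rw [Finset.sum_range_succ, Nat.choose_self] at h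
    simp only [zero_add, Finset.sum_range_one, Nat.choose_zero_right, Nat.sub_zero]
    omega
  | succ k ih =>
    have hk' : k < n := by omega
    have ih' := ih hk'
    have hsplit : n - k = (n - (k + 1)) + 1 := by omega
    rw [Finset.sum_range_succ]
    rw [hsplit] at ih'
    nth_rewrite 2 [Finset.sum_range_succ] at ih'
    have hsymm : n.choose (n - (k + 1)) = n.choose (k + 1) := Nat.choose_symm (by omega)
    rw [hsymm] at ih'
    omega

theorem stmt_3 (n : ℕ) (hn : 1 ≤ n) :
    ∑ k ∈ Finset.range n,
        (∑ i ∈ Finset.range (k + 1), (n.choose i : ℝ)) / ((n - 1).choose k : ℝ)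
      = 2 ^ (n - 1) * ∑ k ∈ Finset.range n, 1 / ((n - 1).choose k : ℝ) := by
  obtain ⟨m, rfl⟩ : ∃ m, n = m + 1 := ⟨n - 1, by omega⟩
  simp only [Nat.add_sub_cancel]
  set f : ℕ → ℝ := fun k =>
    (∑ i ∈ Finset.range (k + 1), ((m + 1).choose i : ℝ)) / (m.choose k : ℝ) with hf
  have hrefl : ∑ k ∈ Finset.range (m + 1), f (m + 1 - 1 - k)
      = ∑ k ∈ Finset.range (m + 1), f k := Finset.sum_range_reflect f (m + 1)
  simp only [Nat.add_sub_cancel] at hrefl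
  have key : ∀ k ∈ Finset.range (m + 1),
      f k + f (m - k) = 2 * (2 ^ m * (1 / (m.choose k : ℝ))) := by
    intro k hk
    rw [Finset.mem_range] at hk
    have hk' : k ≤ m := by omega
    have hc : m.choose (m - k) = m.choose k := Nat.choose_symm hk'
    have hsum : (∑ i ∈ Finset.range (k + 1), (m + 1).choose i) +
        ∑ i ∈ Finset.range (m - k + 1), (m + 1).choose i = 2 ^ (m + 1) := by
      have h := aux_choose_sum (m + 1) k (by omega)
      have he : m + 1 - k = m - k + 1 := by omega
      rwa [he] at h
    have hsumR : (∑ i ∈ Finset.range (k + 1), ((m + 1).choose i : ℝ)) +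
        ∑ i ∈ Finset.range (m - k + 1), ((m + 1).choose i : ℝ) = 2 ^ (m + 1) := by
      have := congrArg (Nat.cast : ℕ → ℝ) hsum
      push_cast at this
      exact this
    have hne : (m.choose k : ℝ) ≠ 0 := by
      exact_mod_cast (Nat.choose_pos hk').ne'
    simp only [hf, hc, ← add_div, hsumR]
    field_simp
    ring
  have h2 : (2 : ℝ) * ∑ k ∈ Finset.range (m + 1), f k
      = 2 * (2 ^ m * ∑ k ∈ Finset.range (m + 1), 1 / (m.choose k : ℝ)) := by
    calc (2 : ℝ) * ∑ k ∈ Finset.range (m + 1), f k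
        = (∑ k ∈ Finset.range (m + 1), f k) + ∑ k ∈ Finset.range (m + 1), f (m - k) := by
          rw [hrefl]; ring
      _ = ∑ k ∈ Finset.range (m + 1), (f k + f (m - k)) := by
          rw [Finset.sum_add_distrib]
      _ = ∑ k ∈ Finset.range (m + 1), 2 * (2 ^ m * (1 / (m.choose k : ℝ))) :=
          Finset.sum_congr rfl key
      _ = 2 * (2 ^ m * ∑ k ∈ Finset.range (m + 1), 1 / (m.choose k : ℝ)) := by
          rw [← Finset.mul_sum, ← Finset.mul_sum]
  linarith
end

section
/- For every even natural number n ≥ 2, ∑_{k=0}^{n-1} (∑_{i=0}^{k} C(n, i)) / C(n-1, k) = 2^n · ∑_{k=0}^{n/2 - 1} 1 / C(n-1, k). -/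
open Finset

lemma pairnat (n k : ℕ) (hk : k < n) :
    ∑ i ∈ range (k + 1), n.choose i + ∑ i ∈ range (n - k), n.choose i = 2 ^ n := by
  have h1 : ∑ i ∈ range (n - k), n.choose i
      = ∑ j ∈ range (n - k), n.choose (k + 1 + j) := by
    rw [← Finset.sum_range_reflect (fun j => n.choose (k + 1 + j)) (n - k)]
    apply Finset.sum_congr rfl
    intro j hj
    rw [mem_range] at hj
    have he : k + 1 + (n - k - 1 - j) = n - j := by omega
    rw [he, Nat.choose_symm (by omega)]
  rw [h1, ← Finset.sum_range_add]
  have : k + 1 + (n - k) = n + 1 := by omega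
  rw [this, Nat.sum_range_choose]

theorem stmt_4 (n : ℕ) (hn : 2 ≤ n) (heven : Even n) :
    ∑ k ∈ Finset.range n,
        (∑ i ∈ Finset.range (k + 1), (n.choose i : ℝ)) / ((n - 1).choose k : ℝ)
      = 2 ^ n * ∑ k ∈ Finset.range (n / 2), 1 / ((n - 1).choose k : ℝ) := by
  obtain ⟨m, rfl⟩ := heven
  have hm : 1 ≤ m := by omega
  set N := m + m with hN
  have hhalf : N / 2 = m := by omega
  -- symmetry of choose (N-1, ·)
  have hsymm : ∀ k, k < N → ((N - 1).choose (N - 1 - k) : ℝ) = ((N - 1).choose k : ℝ) := by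
    intro k hk
    exact_mod_cast Nat.choose_symm (n := N - 1) (k := k) (by omega)
  have hne : ∀ k, k < N → ((N - 1).choose k : ℝ) ≠ 0 := by
    intro k hk
    have : 0 < (N - 1).choose k := Nat.choose_pos (by omega)
    positivity
  -- Step 1: twice the LHS
  have key : (2 : ℝ) * (∑ k ∈ Finset.range N,
        (∑ i ∈ Finset.range (k + 1), (N.choose i : ℝ)) / ((N - 1).choose k : ℝ))
      = ∑ k ∈ Finset.range N, (2 : ℝ) ^ N / ((N - 1).choose k : ℝ) := by
    have hrefl : ∑ k ∈ Finset.range N,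
          (∑ i ∈ Finset.range (k + 1), (N.choose i : ℝ)) / ((N - 1).choose k : ℝ)
        = ∑ k ∈ Finset.range N,
          (∑ i ∈ Finset.range (N - 1 - k + 1), (N.choose i : ℝ)) / ((N - 1).choose (N - 1 - k) : ℝ) :=
      (Finset.sum_range_reflect
        (fun k => (∑ i ∈ Finset.range (k + 1), (N.choose i : ℝ)) / ((N - 1).choose k : ℝ)) N).symm
    rw [two_mul]
    nth_rewrite 2 [hrefl]
    rw [← Finset.sum_add_distrib]
    apply Finset.sum_congr rfl
    intro k hk
    rw [mem_range] at hk
    rw [hsymm k hk]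
    rw [← add_div]
    congr 1
    have h1 : N - 1 - k + 1 = N - k := by omega
    rw [h1]
    exact_mod_cast pairnat N k hk
  -- Step 2: fold the reciprocal sum
  have fold : ∑ k ∈ Finset.range N, (1 : ℝ) / ((N - 1).choose k : ℝ)
      = 2 * ∑ k ∈ Finset.range m, (1 : ℝ) / ((N - 1).choose k : ℝ) := by
    have : ∑ k ∈ Finset.range (m + m), (1 : ℝ) / ((N - 1).choose k : ℝ)
        = ∑ k ∈ Finset.range m, (1 : ℝ) / ((N - 1).choose k : ℝ)
          + ∑ k ∈ Finset.range m, (1 : ℝ) / ((N - 1).choose (m + k) : ℝ) :=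
      Finset.sum_range_add _ m m
    rw [← hN] at this
    rw [this, two_mul]
    congr 1
    rw [← Finset.sum_range_reflect (fun k => (1 : ℝ) / ((N - 1).choose (m + k) : ℝ)) m]
    apply Finset.sum_congr rfl
    intro j hj
    rw [mem_range] at hj
    have he : m + (m - 1 - j) = N - 1 - j := by omega
    rw [he, hsymm j (by omega)]
  have hexp : ∑ k ∈ Finset.range N, (2 : ℝ) ^ N / ((N - 1).choose k : ℝ)
      = (2 : ℝ) ^ N * ∑ k ∈ Finset.range N, 1 / ((N - 1).choose k : ℝ) := by
    rw [Finset.mul_sum]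
    apply Finset.sum_congr rfl
    intro k _
    ring
  rw [hhalf]
  have := key
  rw [hexp, fold] at this
  linarith
end

section
/- For every odd natural number n ≥ 3, ∑_{k=0}^{n-1} (∑_{i=0}^{k} C(n, i)) / C(n-1, k) = 2^n · ∑_{k=0}^{(n-3)/2} 1 / C(n-1, k) + 2^(n-1) / C(n-1, (n-1)/2). -/
open Finset

lemma key_sum (n k : ℕ) (hk : k < n) :
    (∑ i ∈ Finset.range (k + 1), n.choose i)
      + ∑ i ∈ Finset.range (n - k), n.choose i = 2 ^ n := by
  have h1 : ∑ i ∈ Finset.range (n - k), n.choose i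
      = ∑ j ∈ Finset.range (n - k), n.choose (k + 1 + j) := by
    rw [← Finset.sum_range_reflect (fun j => n.choose (k + 1 + j)) (n - k)]
    apply Finset.sum_congr rfl
    intro j hj
    rw [Finset.mem_range] at hj
    have h2 : k + 1 + (n - k - 1 - j) = n - j := by omega
    rw [h2, Nat.choose_symm (by omega)]
  rw [h1, ← Finset.sum_range_add]
  have h3 : k + 1 + (n - k) = n + 1 := by omega
  rw [h3, Nat.sum_range_choose]

theorem stmt_5 (n : ℕ) (hn : 3 ≤ n) (hodd : Odd n) :
    ∑ k ∈ Finset.range n,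
        (∑ i ∈ Finset.range (k + 1), (n.choose i : ℝ)) / ((n - 1).choose k : ℝ)
      = 2 ^ n * ∑ k ∈ Finset.range ((n - 3) / 2 + 1), 1 / ((n - 1).choose k : ℝ)
        + 2 ^ (n - 1) / ((n - 1).choose ((n - 1) / 2) : ℝ) := by
  obtain ⟨m, rfl⟩ := hodd
  have hm : 1 ≤ m := by omega
  have e1 : 2 * m + 1 - 1 = 2 * m := by omega
  have e2 : (2 * m + 1 - 3) / 2 + 1 = m := by omega
  have e3 : (2 * m) / 2 = m := by omega
  rw [e1, e2, e3]
  set f : ℕ → ℝ :=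
    fun k => (∑ i ∈ Finset.range (k + 1), ((2 * m + 1).choose i : ℝ))
      / ((2 * m).choose k : ℝ) with hf
  -- split the sum
  have split : ∑ k ∈ Finset.range (2 * m + 1), f k
      = (∑ k ∈ Finset.range m, (f k + f (2 * m - k))) + f m := by
    have h4 : 2 * m + 1 = m + (m + 1) := by omega
    rw [h4, Finset.sum_range_add, Finset.sum_range_succ']
    have h5 : ∑ i ∈ Finset.range m, f (m + (i + 1))
        = ∑ i ∈ Finset.range m, f (2 * m - i) := by
      rw [← Finset.sum_range_reflect (fun j => f (m + (j + 1))) m]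
      apply Finset.sum_congr rfl
      intro j hj
      rw [Finset.mem_range] at hj
      congr 1
      omega
    rw [h5, Finset.sum_add_distrib]
    simp only [Nat.add_zero, add_assoc]
  rw [split]
  -- middle term
  have hmid : f m = 2 ^ (2 * m) / ((2 * m).choose m : ℝ) := by
    have hk := key_sum (2 * m + 1) m (by omega)
    have h6 : 2 * m + 1 - m = m + 1 := by omega
    rw [h6] at hk
    have h7 : ∑ i ∈ Finset.range (m + 1), (2 * m + 1).choose i = 2 ^ (2 * m) := by
      have : (2 : ℕ) ^ (2 * m + 1) = 2 * 2 ^ (2 * m) := by ring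
      omega
    have h8 : (∑ i ∈ Finset.range (m + 1), ((2 * m + 1).choose i : ℝ))
        = (2 : ℝ) ^ (2 * m) := by
      exact_mod_cast congrArg (Nat.cast : ℕ → ℝ) h7
    simp only [hf, h8]
  rw [hmid]
  congr 1
  -- paired terms
  rw [Finset.mul_sum]
  apply Finset.sum_congr rfl
  intro k hk
  rw [Finset.mem_range] at hk
  have hC : ((2 * m).choose (2 * m - k) : ℝ) = ((2 * m).choose k : ℝ) := by
    exact_mod_cast congrArg (Nat.cast : ℕ → ℝ) (Nat.choose_symm (by omega))
  have hCpos : ((2 * m).choose k : ℝ) ≠ 0 := by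
    exact_mod_cast (Nat.choose_pos (by omega : k ≤ 2 * m)).ne'
  have hkey := key_sum (2 * m + 1) k (by omega)
  have h9 : 2 * m + 1 - k = (2 * m - k) + 1 := by omega
  rw [h9] at hkey
  have h10 : (∑ i ∈ Finset.range (k + 1), ((2 * m + 1).choose i : ℝ))
      + (∑ i ∈ Finset.range ((2 * m - k) + 1), ((2 * m + 1).choose i : ℝ))
      = (2 : ℝ) ^ (2 * m + 1) := by
    exact_mod_cast congrArg (Nat.cast : ℕ → ℝ) hkey
  simp only [hf, hC]
  field_simp
  linarith [h10]
end

section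
/- The sequence n ↦ ∑_{k=0}^{n-1} 1 / C(n-1, k) converges to 2 as n → ∞. Consequently, the expected convergence time u n = 2^(n-1) · ∑_{k=0}^{n-1} 1/C(n-1,k) satisfies u n / 2^n → 1. -/
open Filter Finset

lemma choose_mono_half (n : ℕ) : ∀ s, s ≤ n / 2 → ∀ r, r ≤ s → n.choose r ≤ n.choose s := by
  intro s
  induction s with
  | zero => intro _ r hr; obtain rfl := Nat.le_zero.mp hr; exact le_refl _
  | succ s ih =>
    intro hs r hr
    rcases Nat.eq_or_lt_of_le hr with h | h
    · subst h; exact le_refl _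
    · exact (ih (by omega) r (by omega)).trans
        (Nat.choose_le_succ_of_lt_half_left (by omega))

lemma choose_le_of_between {n r k : ℕ} (hr2 : r ≤ n / 2) (h1 : r ≤ k) (h2 : k ≤ n - r) :
    n.choose r ≤ n.choose k := by
  by_cases hk : k ≤ n / 2
  · exact choose_mono_half n k hk r h1
  · have hkn : k ≤ n := by omega
    calc n.choose r ≤ n.choose (n - k) := choose_mono_half n (n - k) (by omega) r (by omega)
      _ = n.choose k := Nat.choose_symm hkn

lemma key_upper (m : ℕ) (hm : 4 ≤ m) :
    (∑ k ∈ Finset.range (m + 1), 1 / (m.choose k : ℝ)) ≤ 2 + 4 / m := by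
  have hset : Finset.range (m + 1)
      = insert 0 (insert 1 (insert (m - 1) (insert m (Finset.Ico 2 (m - 1))))) := by
    ext x; simp [Finset.mem_Ico]; omega
  have hmR : (4 : ℝ) ≤ (m : ℝ) := by exact_mod_cast hm
  have hm0 : (0 : ℝ) < (m : ℝ) := by linarith
  have hm1 : (0 : ℝ) < (m : ℝ) - 1 := by linarith
  have hmid : ∀ k ∈ Finset.Ico 2 (m - 1), 1 / (m.choose k : ℝ) ≤ 2 / ((m : ℝ) * ((m : ℝ) - 1)) := by
    intro k hk
    simp only [Finset.mem_Ico] at hk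
    have hch : m.choose 2 ≤ m.choose k :=
      choose_le_of_between (by omega) (by omega) (by omega)
    have h2 : (m.choose 2 : ℝ) = (m : ℝ) * ((m : ℝ) - 1) / 2 := Nat.cast_choose_two (K := ℝ) m
    have hpos : (0 : ℝ) < (m.choose 2 : ℝ) := by rw [h2]; positivity
    have : 1 / (m.choose k : ℝ) ≤ 1 / (m.choose 2 : ℝ) :=
      one_div_le_one_div_of_le hpos (by exact_mod_cast hch)
    calc 1 / (m.choose k : ℝ) ≤ 1 / (m.choose 2 : ℝ) := this
      _ = 2 / ((m : ℝ) * ((m : ℝ) - 1)) := by rw [h2]; field_simp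
  have hmidsum : (∑ k ∈ Finset.Ico 2 (m - 1), 1 / (m.choose k : ℝ))
      ≤ (m - 3 : ℕ) * (2 / ((m : ℝ) * ((m : ℝ) - 1))) := by
    have := Finset.sum_le_card_nsmul (Finset.Ico 2 (m - 1))
      (fun k => 1 / (m.choose k : ℝ)) (2 / ((m : ℝ) * ((m : ℝ) - 1))) hmid
    simpa [Nat.card_Ico, nsmul_eq_mul, show m - 1 - 2 = m - 3 by omega] using this
  rw [hset]
  rw [Finset.sum_insert (by simp only [Finset.mem_insert, Finset.mem_Ico]; omega),
      Finset.sum_insert (by simp only [Finset.mem_insert, Finset.mem_Ico]; omega),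
      Finset.sum_insert (by simp only [Finset.mem_insert, Finset.mem_Ico]; omega),
      Finset.sum_insert (by simp only [Finset.mem_Ico]; omega)]
  have e1 : m.choose 0 = 1 := Nat.choose_zero_right m
  have e2 : m.choose 1 = m := Nat.choose_one_right m
  have e3 : m.choose (m - 1) = m := by
    have : m.choose (m - 1) = m.choose 1 := by
      rw [← Nat.choose_symm (by omega : 1 ≤ m)]
    rw [this, Nat.choose_one_right]
  have e4 : m.choose m = 1 := Nat.choose_self m
  rw [e1, e2, e3, e4]
  have h3 : ((m - 3 : ℕ) : ℝ) = (m : ℝ) - 3 := by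
    have : (3 : ℕ) ≤ m := by omega
    push_cast [this]; ring
  have hmids' : (∑ k ∈ Finset.Ico 2 (m - 1), 1 / (m.choose k : ℝ))
      ≤ ((m : ℝ) - 3) * (2 / ((m : ℝ) * ((m : ℝ) - 1))) := by rw [← h3]; exact hmidsum
  have key2 : ((m : ℝ) - 3) * (2 / ((m : ℝ) * ((m : ℝ) - 1))) ≤ 2 / (m : ℝ) := by
    rw [mul_div_assoc', div_le_div_iff₀ (by positivity) hm0]
    nlinarith
  have e5 : (4 : ℝ) / m = 1 / m + 1 / m + 2 / m := by ring
  have e6 : (1 : ℝ) / 1 = 1 := by norm_num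
  linarith [hmids']

lemma key_lower (m : ℕ) (hm : 1 ≤ m) :
    (2 : ℝ) ≤ ∑ k ∈ Finset.range (m + 1), 1 / (m.choose k : ℝ) := by
  have hsub : ({0, m} : Finset ℕ) ⊆ Finset.range (m + 1) := by
    intro x hx; simp at hx; simp; omega
  have hpair : (∑ k ∈ ({0, m} : Finset ℕ), 1 / (m.choose k : ℝ)) = 2 := by
    rw [Finset.sum_pair (by omega : (0 : ℕ) ≠ m)]
    simp [Nat.choose_self]
    norm_num
  calc (2 : ℝ) = ∑ k ∈ ({0, m} : Finset ℕ), 1 / (m.choose k : ℝ) := hpair.symm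
    _ ≤ ∑ k ∈ Finset.range (m + 1), 1 / (m.choose k : ℝ) := by
        apply Finset.sum_le_sum_of_subset_of_nonneg hsub
        intro i _ _; positivity

lemma sum_tendsto :
    Filter.Tendsto (fun n : ℕ => ∑ k ∈ Finset.range n, 1 / ((n - 1).choose k : ℝ))
      Filter.atTop (nhds 2) := by
  rw [← Filter.tendsto_add_atTop_iff_nat 1]
  have heq : (fun n : ℕ => ∑ k ∈ Finset.range (n + 1), 1 / (((n + 1) - 1).choose k : ℝ))
      = fun n : ℕ => ∑ k ∈ Finset.range (n + 1), 1 / (n.choose k : ℝ) := by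
    funext n; simp
  rw [show (fun n : ℕ => ∑ k ∈ Finset.range (n + 1), 1 / ((n + 1 - 1).choose k : ℝ))
      = fun n : ℕ => ∑ k ∈ Finset.range (n + 1), 1 / (n.choose k : ℝ) from heq]
  have hupper : Filter.Tendsto (fun m : ℕ => (2 : ℝ) + 4 / m) Filter.atTop (nhds 2) := by
    have : Filter.Tendsto (fun m : ℕ => (2 : ℝ) + 4 / m) Filter.atTop (nhds (2 + 0)) :=
      (tendsto_const_nhds : Filter.Tendsto (fun _ : ℕ => (2 : ℝ)) Filter.atTop (nhds 2)).add
        (tendsto_const_div_atTop_nhds_zero_nat 4)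
    simpa using this
  refine tendsto_of_tendsto_of_tendsto_of_le_of_le' tendsto_const_nhds hupper ?_ ?_
  · filter_upwards [Filter.eventually_ge_atTop 1] with m hm using key_lower m hm
  · filter_upwards [Filter.eventually_ge_atTop 4] with m hm using key_upper m hm

theorem stmt_9 :
    Filter.Tendsto (fun n : ℕ => ∑ k ∈ Finset.range n, 1 / ((n - 1).choose k : ℝ))
      Filter.atTop (nhds 2)
    ∧ Filter.Tendsto
        (fun n : ℕ =>
          (2 ^ (n - 1) * ∑ k ∈ Finset.range n, 1 / ((n - 1).choose k : ℝ)) / 2 ^ n)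
        Filter.atTop (nhds 1) := by
  refine ⟨sum_tendsto, ?_⟩
  have h := sum_tendsto.div_const 2
  have h22 : (2 : ℝ) / 2 = 1 := by norm_num
  rw [h22] at h
  refine h.congr' ?_
  filter_upwards [Filter.eventually_ge_atTop 1] with n hn
  have hpow : (2 : ℝ) ^ n = 2 ^ (n - 1) * 2 := by
    rw [← pow_succ, show n - 1 + 1 = n from by omega]
  rw [hpow, mul_comm ((2 : ℝ) ^ (n - 1)) 2, mul_comm ((2 : ℝ) ^ (n - 1))
      (∑ k ∈ Finset.range n, 1 / ((n - 1).choose k : ℝ)),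
    mul_div_mul_right _ _ (pow_ne_zero _ (two_ne_zero))]
end

section
/- Let n ≥ 2 be a natural number and let u : ℕ → ℝ satisfy u 0 = 0, u k = 1 + (k/n)·u (k-1) + ((n-k)/n)·u (k+1) for every k with 1 ≤ k ≤ n-1, and u n = 1 + u (n-1). Then u n ≥ 2^n. -/
theorem stmt_10 (n : ℕ) (hn : 2 ≤ n) (u : ℕ → ℝ)
    (h0 : u 0 = 0)
    (hrec : ∀ k, 1 ≤ k → k ≤ n - 1 →
      u k = 1 + ((k : ℝ) / n) * u (k - 1) + (((n : ℝ) - k) / n) * u (k + 1))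
    (hn' : u n = 1 + u (n - 1)) :
    2 ^ n ≤ u n := by
  have hn0 : (0:ℝ) < n := by positivity
  set d : ℕ → ℝ := fun k => u (k+1) - u k with hd
  have hdn1 : d (n-1) = 1 := by
    have h1 : n - 1 + 1 = n := by omega
    simp only [hd, h1]
    linarith [hn']
  -- key recurrence
  have key : ∀ k, 1 ≤ k → k ≤ n - 1 → (k:ℝ) * d (k-1) = ((n:ℝ) - k) * d k + n := by
    intro k h1 h2
    have hk1 : k - 1 + 1 = k := by omega
    have hr := hrec k h1 h2
    have : (n:ℝ) * u k = n + k * u (k-1) + ((n:ℝ) - k) * u (k+1) := by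
      field_simp at hr
      linarith [hr]
    simp only [hd, hk1]
    ring_nf
    ring_nf at this
    linarith [this]
  set S : ℕ → ℝ := fun k => ∑ j ∈ Finset.Icc (k+1) n, (Nat.choose n j : ℝ) with hS
  have claim : ∀ j, j ≤ n - 1 → (Nat.choose (n-1) (n-1-j) : ℝ) * d (n-1-j) = S (n-1-j) := by
    intro j
    induction j with
    | zero =>
      intro _
      simp only [Nat.sub_zero, Nat.choose_self, Nat.cast_one, one_mul, hdn1, hS]
      have : n - 1 + 1 = n := by omega
      rw [this]
      simp
    | succ j ih =>
      intro hj
      have hj' : j ≤ n - 1 := by omega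
      have IH := ih hj'
      set k := n - 1 - (j+1) with hk
      have hk1 : n - 1 - j = k + 1 := by omega
      rw [hk1] at IH
      have hkn : k + 1 ≤ n - 1 := by omega
      have hrec2 := key (k+1) (by omega) hkn
      have hsub : (k+1) - 1 = k := by omega
      rw [hsub] at hrec2
      -- hrec2 : (k+1) * d k = (n - (k+1)) * d (k+1) + n
      -- binomial identities
      have hb1 : (Nat.choose (n-1) (k+1) * (k+1) : ℕ) = Nat.choose (n-1) k * ((n-1) - k) :=
        Nat.choose_succ_right_eq (n-1) k
      have hb2 : (n * Nat.choose (n-1) k : ℕ) = Nat.choose n (k+1) * (k+1) := by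
        have h := Nat.add_one_mul_choose_eq (n-1) k
        rwa [show n - 1 + 1 = n from by omega] at h
      have hcast : ((n - 1 - k : ℕ) : ℝ) = (n:ℝ) - ((k:ℝ)+1) := by
        rw [show n - 1 - k = n - (k+1) from by omega, Nat.cast_sub (by omega : k + 1 ≤ n)]
        push_cast
        ring
      have hb1' : ((Nat.choose (n-1) (k+1) : ℝ)) * ((k:ℝ)+1) = (Nat.choose (n-1) k : ℝ) * ((n:ℝ) - ((k:ℝ)+1)) := by
        rw [← hcast]
        exact_mod_cast hb1
      have hb2' : (n:ℝ) * (Nat.choose (n-1) k : ℝ) = (Nat.choose n (k+1) : ℝ) * ((k:ℝ)+1) := by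
        exact_mod_cast hb2
      have hSsplit : S k = (Nat.choose n (k+1) : ℝ) + S (k+1) := by
        simp only [hS]
        have hins : Finset.Icc (k+1) n = insert (k+1) (Finset.Icc (k+1+1) n) :=
          (Finset.insert_Icc_add_one_left_eq_Icc (by omega)).symm
        rw [hins, Finset.sum_insert (by simp)]
      -- main computation
      have hkpos : (0:ℝ) < (k:ℝ) + 1 := by positivity
      have main : ((k:ℝ)+1) * ((Nat.choose (n-1) k : ℝ) * d k) = ((k:ℝ)+1) * S k := by
        have h1 : ((k:ℝ)+1) * ((Nat.choose (n-1) k : ℝ) * d k)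
            = (Nat.choose (n-1) k : ℝ) * (((k:ℝ)+1) * d k) := by ring
        rw [h1]
        have h2 : ((k:ℝ)+1) * d k = ((n:ℝ) - (k+1)) * d (k+1) + n := by
          push_cast at hrec2 ⊢
          linarith [hrec2]
        rw [h2]
        rw [hSsplit]
        have : (Nat.choose (n-1) k : ℝ) * (((n:ℝ) - (k+1)) * d (k+1) + n)
            = ((Nat.choose (n-1) k : ℝ) * ((n:ℝ) - (k+1))) * d (k+1) + (n:ℝ) * (Nat.choose (n-1) k : ℝ) := by ring
        rw [this, ← hb1', hb2']
        have : (Nat.choose (n-1) (k+1) : ℝ) * ((k:ℝ)+1) * d (k+1)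
            = ((k:ℝ)+1) * ((Nat.choose (n-1) (k+1) : ℝ) * d (k+1)) := by ring
        rw [this, IH]
        ring
      have := mul_left_cancel₀ (ne_of_gt hkpos) main
      exact this
  -- d 0 = 2^n - 1
  have hS0 : S 0 = 2 ^ n - 1 := by
    have hsum : (∑ j ∈ Finset.range (n+1), (Nat.choose n j : ℝ)) = 2 ^ n := by
      exact_mod_cast Nat.sum_range_choose n
    have hins : Finset.range (n+1) = insert 0 (Finset.Icc 1 n) := by
      rw [Finset.range_eq_Ico, Finset.Ico_add_one_right_eq_Icc]
      exact (Finset.insert_Icc_add_one_left_eq_Icc (Nat.zero_le n)).symm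
    rw [hins, Finset.sum_insert (by simp)] at hsum
    simp only [Nat.choose_zero_right, Nat.cast_one] at hsum
    simp only [hS, Nat.choose_zero_right, Nat.cast_one, zero_add]
    linarith [hsum]
  have hd0 : d 0 = 2 ^ n - 1 := by
    have h := claim (n-1) le_rfl
    simp only [Nat.sub_self, Nat.choose_zero_right, Nat.cast_one, one_mul] at h
    rw [h, hS0]
  -- nonnegativity of d k for k ≤ n - 1
  have hdnn : ∀ k, k ≤ n - 1 → 0 ≤ d k := by
    intro k hk
    have h := claim (n-1-k) (by omega)
    rw [show n - 1 - (n - 1 - k) = k from by omega] at h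
    have hcpos : (0:ℝ) < (Nat.choose (n-1) k : ℝ) := by
      exact_mod_cast Nat.choose_pos hk
    have hSnn : 0 ≤ S k := Finset.sum_nonneg fun j _ => by positivity
    nlinarith [h, hcpos, hSnn]
  -- telescoping sum
  have htel : u n = ∑ i ∈ Finset.range n, d i := by
    have := Finset.sum_range_sub u n
    simp only [hd]
    rw [this, h0]
    ring
  have hsub : ({0, n-1} : Finset ℕ) ⊆ Finset.range n := by
    intro x hx
    simp only [Finset.mem_insert, Finset.mem_singleton] at hx
    rcases hx with rfl | rfl <;> simp [Finset.mem_range] <;> omega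
  have hpair : ∑ i ∈ ({0, n-1} : Finset ℕ), d i = d 0 + d (n-1) := by
    rw [Finset.sum_pair (by omega : 0 ≠ n-1)]
  have hge : d 0 + d (n-1) ≤ ∑ i ∈ Finset.range n, d i := by
    rw [← hpair]
    apply Finset.sum_le_sum_of_subset_of_nonneg hsub
    intro i hi _
    exact hdnn i (by simp [Finset.mem_range] at hi; omega)
  rw [htel]
  rw [hd0, hdn1] at hge
  linarith [hge]
end

section
/- Let n, n₀, n₁ be natural numbers with n = n₀ + n₁, n ≥ 1 and 2·n₀ ≥ n. Then ∑_{i=0}^{n₀-1} ((n₁ + i)/n)^(6·(i·ln i + 1)) < 1/2. -/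
open Finset Real

/-- Per-index upper bound used for the union bound. -/
noncomputable def Bd : ℕ → ℝ := fun i =>
  if i = 0 then (1/2 : ℝ)^6
  else if i = 1 then (3/4 : ℝ)^6
  else if i = 2 then (5/6 : ℝ)^14
  else if i = 3 then (7/8 : ℝ)^24
  else if i = 4 then (9/10 : ℝ)^38
  else if i = 5 then (11/12 : ℝ)^54
  else if i = 6 then (13/14 : ℝ)^69
  else if i = 7 then (15/16 : ℝ)^79
  else 1/(2*(i:ℝ)*((i:ℝ)+1))

lemma Bd_nonneg (i : ℕ) : 0 ≤ Bd i := by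
  unfold Bd
  repeat' split
  all_goals positivity

lemma Bd_tail {i : ℕ} (hi : 8 ≤ i) : Bd i = 1/(2*(i:ℝ)*((i:ℝ)+1)) := by
  unfold Bd
  split_ifs <;> first | rfl | exact ((by omega : False)).elim

lemma Bd_tail_sum {m : ℕ} (hm : 8 ≤ m) :
    ∑ i ∈ Finset.Ico 8 m, Bd i ≤ 1/16 - 1/(2*(m:ℝ)) := by
  induction m, hm using Nat.le_induction with
  | base => simp; norm_num
  | succ m hm ih =>
    rw [Finset.sum_Ico_succ_top hm]
    have hm0 : (0:ℝ) < (m:ℝ) := by exact_mod_cast (by omega : 0 < m)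
    have hB : Bd m = 1/(2*(m:ℝ)) - 1/(2*((m:ℝ)+1)) := by
      rw [Bd_tail hm]
      field_simp
      ring
    push_cast
    rw [hB]
    have : (1:ℝ)/(2*((m:ℝ)+1)) ≤ 1/(2*(m:ℝ)) := by
      apply one_div_le_one_div_of_le <;> linarith
    linarith

set_option maxHeartbeats 1000000 in
lemma sum_Bd_lt (m : ℕ) : ∑ i ∈ Finset.range m, Bd i < 1/2 := by
  have hhead : ∑ i ∈ Finset.range 8, Bd i
      = (1/2 : ℝ)^6 + (3/4 : ℝ)^6 + (5/6 : ℝ)^14 + (7/8 : ℝ)^24 + (9/10 : ℝ)^38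
        + (11/12 : ℝ)^54 + (13/14 : ℝ)^69 + (15/16 : ℝ)^79 := by
    simp [Finset.sum_range_succ, Bd]
    try ring
  have hheadlt : ∑ i ∈ Finset.range 8, Bd i < 7/16 := by
    rw [hhead]; norm_num
  rcases le_or_gt m 8 with hm | hm
  · have h1 : ∑ i ∈ Finset.range m, Bd i ≤ ∑ i ∈ Finset.range 8, Bd i :=
      Finset.sum_le_sum_of_subset_of_nonneg (Finset.range_subset_range.mpr hm)
        (fun i _ _ => Bd_nonneg i)
    linarith
  · have hsplit : ∑ i ∈ Finset.range 8, Bd i + ∑ i ∈ Finset.Ico 8 m, Bd i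
        = ∑ i ∈ Finset.range m, Bd i := by
      rw [Finset.range_eq_Ico, Finset.range_eq_Ico]
      exact Finset.sum_Ico_consecutive Bd (Nat.zero_le 8) hm.le
    have htail := Bd_tail_sum hm.le
    have hmpos : (0:ℝ) < (m:ℝ) := by exact_mod_cast (by omega : 0 < m)
    have : (0:ℝ) < 1/(2*(m:ℝ)) := by positivity
    linarith

lemma head_case (b : ℝ) (hb0 : 0 ≤ b) (c : ℝ) (hb : b ≤ c) (hc0 : 0 < c) (hc1 : c ≤ 1)
    (E : ℝ) (hE : 0 ≤ E) (m : ℕ) (hm : (m:ℝ) ≤ E) : b ^ E ≤ c ^ m :=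
  (Real.rpow_le_rpow hb0 hb hE).trans
    ((Real.rpow_le_rpow_of_exponent_ge hc0 hc1 hm).trans_eq (Real.rpow_natCast c m))

lemma log_nat_nonneg' (i : ℕ) : 0 ≤ Real.log i := by
  rcases Nat.eq_zero_or_pos i with h | h
  · simp [h]
  · exact Real.log_nonneg (by exact_mod_cast h)

lemma log_two_ge : (2/3 : ℝ) ≤ Real.log 2 := by
  have := Real.log_two_gt_d9; norm_num at this ⊢; linarith

lemma log_three_ge : (1 : ℝ) ≤ Real.log 3 := by
  rw [Real.le_log_iff_exp_le (by norm_num)]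
  exact Real.exp_one_lt_d9.le.trans (by norm_num)

lemma log_four_ge : (4/3 : ℝ) ≤ Real.log 4 := by
  have h : (4:ℝ) = 2^(2:ℕ) := by norm_num
  rw [h, Real.log_pow]
  have := log_two_ge
  push_cast
  linarith

lemma log_five_ge : (8/5 : ℝ) ≤ Real.log 5 := by
  rw [Real.le_log_iff_exp_le (by norm_num)]
  have h8 : Real.exp (8/5) ^ (5:ℕ) = Real.exp 8 := by
    rw [← Real.exp_nat_mul]; norm_num
  have he8 : Real.exp 8 ≤ 3125 := by
    have h1 : Real.exp 8 = Real.exp 1 ^ (8:ℕ) := by rw [← Real.exp_nat_mul]; norm_num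
    rw [h1]
    calc Real.exp 1 ^ (8:ℕ) ≤ (2.7182818286:ℝ) ^ (8:ℕ) :=
          pow_le_pow_left₀ (Real.exp_pos 1).le Real.exp_one_lt_d9.le 8
    _ ≤ 3125 := by norm_num
  have h5 : Real.exp (8/5) ^ (5:ℕ) ≤ (5:ℝ) ^ (5:ℕ) := by
    rw [h8]; norm_num; linarith
  exact le_of_pow_le_pow_left₀ (by norm_num) (by norm_num) h5

lemma log_six_ge : (7/4 : ℝ) ≤ Real.log 6 := by
  rw [Real.le_log_iff_exp_le (by norm_num)]
  have h8 : Real.exp (7/4) ^ (4:ℕ) = Real.exp 7 := by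
    rw [← Real.exp_nat_mul]; norm_num
  have he8 : Real.exp 7 ≤ 1296 := by
    have h1 : Real.exp 7 = Real.exp 1 ^ (7:ℕ) := by rw [← Real.exp_nat_mul]; norm_num
    rw [h1]
    calc Real.exp 1 ^ (7:ℕ) ≤ (2.7182818286:ℝ) ^ (7:ℕ) :=
          pow_le_pow_left₀ (Real.exp_pos 1).le Real.exp_one_lt_d9.le 7
    _ ≤ 1296 := by norm_num
  have h5 : Real.exp (7/4) ^ (4:ℕ) ≤ (6:ℝ) ^ (4:ℕ) := by
    rw [h8]; norm_num; linarith
  exact le_of_pow_le_pow_left₀ (by norm_num) (by norm_num) h5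

lemma log_seven_ge : (7/4 : ℝ) ≤ Real.log 7 :=
  log_six_ge.trans (Real.log_le_log (by norm_num) (by norm_num))

set_option maxHeartbeats 1000000 in
lemma point_bound (n n₀ n₁ i : ℕ) (hsum : n = n₀ + n₁) (hn : 1 ≤ n) (h0 : n ≤ 2 * n₀)
    (hi : i < n₀) :
    (((n₁ : ℝ) + i) / n) ^ (6 * ((i : ℝ) * Real.log i + 1)) ≤ Bd i := by
  have hlogi := log_nat_nonneg' i
  have hEnn : (6:ℝ) ≤ 6 * ((i : ℝ) * Real.log i + 1) := by
    have h1 : 0 ≤ (i:ℝ) * Real.log i := mul_nonneg (Nat.cast_nonneg i) hlogi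
    linarith
  have hnpos : (0:ℝ) < n := by exact_mod_cast hn
  have hkey : (n₁ + i) * (2*i+2) ≤ n * (2*i+1) := by
    rcases le_or_gt n (2*i+1) with h | h
    · have h1 : n₁ + i + 1 ≤ n := by omega
      nlinarith [Nat.mul_le_mul_right (2*i+2) h1]
    · have h1 : 2*n₁ ≤ n := by omega
      have h2 : 2*i+2 ≤ n := by omega
      nlinarith [Nat.mul_le_mul_right (i+1) h1, Nat.mul_le_mul_left i h2]
  have hb : ((n₁:ℝ)+i)/n ≤ (2*(i:ℝ)+1)/(2*(i:ℝ)+2) := by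
    rw [div_le_div_iff₀ hnpos (by positivity)]
    have hc : ((n₁:ℝ) + i) * (2*(i:ℝ)+2) ≤ (n:ℝ) * (2*(i:ℝ)+1) := by exact_mod_cast hkey
    nlinarith [hc]
  rcases lt_or_ge i 8 with h8 | h8
  · interval_cases i
    · rw [show Bd 0 = ((1:ℝ)/2)^6 by norm_num [Bd]]
      exact head_case _ (by positivity) _ (hb.trans_eq (by norm_num)) (by norm_num)
        (by norm_num) _ (by linarith) 6 (by push_cast; norm_num)
    · rw [show Bd 1 = ((3:ℝ)/4)^6 by norm_num [Bd]]
      exact head_case _ (by positivity) _ (hb.trans_eq (by norm_num)) (by norm_num)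
        (by norm_num) _ (by linarith) 6 (by push_cast; norm_num)
    · rw [show Bd 2 = ((5:ℝ)/6)^14 by norm_num [Bd]]
      exact head_case _ (by positivity) _ (hb.trans_eq (by norm_num)) (by norm_num)
        (by norm_num) _ (by linarith) 14 (by push_cast; nlinarith [log_two_ge])
    · rw [show Bd 3 = ((7:ℝ)/8)^24 by norm_num [Bd]]
      exact head_case _ (by positivity) _ (hb.trans_eq (by norm_num)) (by norm_num)
        (by norm_num) _ (by linarith) 24 (by push_cast; nlinarith [log_three_ge])
    · rw [show Bd 4 = ((9:ℝ)/10)^38 by norm_num [Bd]]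
      exact head_case _ (by positivity) _ (hb.trans_eq (by norm_num)) (by norm_num)
        (by norm_num) _ (by linarith) 38 (by push_cast; nlinarith [log_four_ge])
    · rw [show Bd 5 = ((11:ℝ)/12)^54 by norm_num [Bd]]
      exact head_case _ (by positivity) _ (hb.trans_eq (by norm_num)) (by norm_num)
        (by norm_num) _ (by linarith) 54 (by push_cast; nlinarith [log_five_ge])
    · rw [show Bd 6 = ((13:ℝ)/14)^69 by norm_num [Bd]]
      exact head_case _ (by positivity) _ (hb.trans_eq (by norm_num)) (by norm_num)
        (by norm_num) _ (by linarith) 69 (by push_cast; nlinarith [log_six_ge])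
    · rw [show Bd 7 = ((15:ℝ)/16)^79 by norm_num [Bd]]
      exact head_case _ (by positivity) _ (hb.trans_eq (by norm_num)) (by norm_num)
        (by norm_num) _ (by linarith) 79 (by push_cast; nlinarith [log_seven_ge])
  · -- tail case i ≥ 8
    have hstep : (((n₁:ℝ)+i)/n) ^ (6 * ((i : ℝ) * Real.log i + 1))
        ≤ ((2*(i:ℝ)+1)/(2*(i:ℝ)+2)) ^ (6 * ((i : ℝ) * Real.log i + 1)) :=
      Real.rpow_le_rpow (by positivity) hb (by linarith)
    refine hstep.trans ?_
    set x : ℝ := (i:ℝ) with hxdef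
    have hx : (8:ℝ) ≤ x := by rw [hxdef]; exact_mod_cast h8
    have hxpos : (0:ℝ) < x := by linarith
    set L : ℝ := Real.log x with hLdef
    set E : ℝ := 6 * (x * L + 1) with hEdef
    have hEnn' : (0:ℝ) ≤ E := by linarith
    have hc : (0:ℝ) < (2*x+1)/(2*x+2) := by positivity
    rw [Bd_tail h8, Real.rpow_def_of_pos hc]
    have hRpos : (0:ℝ) < 1/(2*x*(x+1)) := by positivity
    rw [← Real.exp_log hRpos]
    apply Real.exp_le_exp.mpr
    have hlogc : Real.log ((2*x+1)/(2*x+2)) ≤ -(1/(2*x+2)) := by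
      have h := Real.log_le_sub_one_of_pos hc
      have heq : (2*x+1)/(2*x+2) - 1 = -(1/(2*x+2)) := by
        field_simp
        ring
      linarith
    have hmul : Real.log ((2*x+1)/(2*x+2)) * E ≤ -(1/(2*x+2)) * E :=
      mul_le_mul_of_nonneg_right hlogc hEnn'
    have hL8 : 3 * Real.log 2 ≤ L := by
      have h1 : Real.log 8 ≤ Real.log x := Real.log_le_log (by norm_num) hx
      have h2 : Real.log 8 = 3 * Real.log 2 := by
        rw [show (8:ℝ) = 2^(3:ℕ) by norm_num, Real.log_pow]; push_cast; ring
      rw [h2] at h1; exact h1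
    have hl2 : (2/3:ℝ) ≤ Real.log 2 := log_two_ge
    have hLx1 : Real.log (x+1) ≤ Real.log 2 + Real.log x := by
      have h1 : x + 1 ≤ 2*x := by linarith
      have h2 : Real.log (x+1) ≤ Real.log (2*x) := Real.log_le_log (by linarith) h1
      rwa [Real.log_mul (by norm_num) (by linarith)] at h2
    have hlogR : Real.log (1/(2*x*(x+1))) = -(Real.log 2 + Real.log x + Real.log (x+1)) := by
      rw [one_div, Real.log_inv, Real.log_mul (by positivity) (by positivity),
        Real.log_mul (by norm_num) (by positivity)]
    rw [hlogR]
    have key2 : (2*x+2) * (Real.log 2 + Real.log x + Real.log (x+1)) ≤ E := by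
      have hA : (2*x+2) * (Real.log 2 + Real.log x + Real.log (x+1))
          ≤ (2*x+2) * (2*Real.log 2 + 2*L) := by
        have : Real.log 2 + Real.log x + Real.log (x+1) ≤ 2*Real.log 2 + 2*L := by
          rw [hLdef]; linarith
        exact mul_le_mul_of_nonneg_left this (by linarith)
      have hB : (2*x-4) * (3*Real.log 2) ≤ (2*x-4) * L :=
        mul_le_mul_of_nonneg_left hL8 (by linarith)
      have hC : (0:ℝ) ≤ (2*x-16) * Real.log 2 :=
        mul_nonneg (by linarith) (by linarith)
      rw [hEdef]
      nlinarith
    have hdiv : Real.log 2 + Real.log x + Real.log (x+1) ≤ E / (2*x+2) := by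
      rw [le_div_iff₀ (by linarith : (0:ℝ) < 2*x+2)]
      linarith [key2]
    calc Real.log ((2*x+1)/(2*x+2)) * E ≤ -(1/(2*x+2)) * E := hmul
      _ = -(E/(2*x+2)) := by ring
      _ ≤ -(Real.log 2 + Real.log x + Real.log (x+1)) := by linarith [hdiv]

theorem stmt_11 (n n₀ n₁ : ℕ) (hsum : n = n₀ + n₁) (hn : 1 ≤ n) (h0 : n ≤ 2 * n₀) :
    ∑ i ∈ Finset.range n₀,
        ((((n₁ : ℝ) + i) / n) ^ (6 * ((i : ℝ) * Real.log i + 1)) : ℝ) < 1 / 2 := by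
  calc ∑ i ∈ Finset.range n₀,
        ((((n₁ : ℝ) + i) / n) ^ (6 * ((i : ℝ) * Real.log i + 1)) : ℝ)
      ≤ ∑ i ∈ Finset.range n₀, Bd i := by
        apply Finset.sum_le_sum
        intro i hi
        exact point_bound n n₀ n₁ i hsum hn h0 (Finset.mem_range.mp hi)
    _ < 1/2 := sum_Bd_lt n₀
end

section
/- Let n, n₀, n₁ be natural numbers with n = n₀ + n₁, n ≥ 1 and 2·n₀ ≥ n. Then ∑_{i=0}^{⌊(n₀-1)/2⌋} ((n₁ + i)/n)^(6·(i·ln i + 1)) ≤ 2/5. -/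
open Real Finset

lemma q_le_third : ((3:ℝ)/4) ^ ((6:ℝ) * Real.log 2) ≤ 1/3 := by
  have h34 : (0:ℝ) < 3/4 := by norm_num
  have h1 : (207/50 : ℝ) ≤ 6 * Real.log 2 := by
    have := Real.log_two_gt_d9
    nlinarith
  have h2 : ((3:ℝ)/4) ^ ((6:ℝ) * Real.log 2) ≤ (3/4 : ℝ) ^ ((207:ℝ)/50) :=
    Real.rpow_le_rpow_of_exponent_ge h34 (by norm_num) h1
  refine h2.trans ?_
  have key : ((3/4:ℝ) ^ ((207:ℝ)/50)) ^ (50:ℕ) ≤ ((1/3:ℝ)) ^ (50:ℕ) := by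
    rw [← Real.rpow_natCast ((3/4:ℝ) ^ ((207:ℝ)/50)) 50, ← Real.rpow_mul h34.le]
    norm_num
  exact le_of_pow_le_pow_left₀ (by norm_num) (by norm_num) key

lemma e6 : ((3:ℝ)/4) ^ ((6:ℝ)) = (3/4:ℝ)^(6:ℕ) := by
  rw [show ((6:ℝ)) = ((6:ℕ):ℝ) by norm_num, Real.rpow_natCast]

lemma g_bound (i : ℕ) (hi : 2 ≤ i) :
    ((3:ℝ)/4) ^ (6 * ((i : ℝ) * Real.log i + 1)) ≤ (3/4:ℝ)^(6:ℕ) * (1/3:ℝ)^i := by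
  have h34 : (0:ℝ) < 3/4 := by norm_num
  have hlog : Real.log 2 ≤ Real.log i := by
    apply Real.log_le_log (by norm_num)
    exact_mod_cast hi
  have hexp : (6:ℝ) + (6 * Real.log 2) * i ≤ 6 * ((i : ℝ) * Real.log i + 1) := by
    have hi' : (2:ℝ) ≤ i := by exact_mod_cast hi
    nlinarith [Real.log_pos (show (1:ℝ) < 2 by norm_num)]
  have step1 : ((3:ℝ)/4) ^ (6 * ((i : ℝ) * Real.log i + 1)) ≤
      ((3:ℝ)/4) ^ ((6:ℝ) + (6 * Real.log 2) * i) :=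
    Real.rpow_le_rpow_of_exponent_ge h34 (by norm_num) hexp
  refine step1.trans ?_
  rw [Real.rpow_add h34, Real.rpow_mul h34.le, Real.rpow_natCast, e6]
  apply mul_le_mul_of_nonneg_left _ (by positivity)
  exact pow_le_pow_left₀ (Real.rpow_nonneg h34.le _) q_le_third i

theorem stmt_12 (n n₀ n₁ : ℕ) (hsum : n = n₀ + n₁) (hn : 1 ≤ n) (h0 : n ≤ 2 * n₀) :
    ∑ i ∈ Finset.range ((n₀ - 1) / 2 + 1),
        ((((n₁ : ℝ) + i) / n) ^ (6 * ((i : ℝ) * Real.log i + 1)) : ℝ) ≤ 2 / 5 := by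
  set N := (n₀ - 1) / 2 + 1 with hN
  have hnpos : (0:ℝ) < n := by exact_mod_cast hn
  have step1 : ∑ i ∈ Finset.range N,
        ((((n₁ : ℝ) + i) / n) ^ (6 * ((i : ℝ) * Real.log i + 1)) : ℝ) ≤
      ∑ i ∈ Finset.range N, ((3:ℝ)/4) ^ (6 * ((i : ℝ) * Real.log i + 1)) := by
    apply Finset.sum_le_sum
    intro i hig
    have hmem := Finset.mem_range.mp hig
    have hfrac : ((n₁ : ℝ) + i) / n ≤ 3/4 := by
      rw [div_le_iff₀ hnpos]
      have h4 : 4 * (n₁ + i) ≤ 3 * n := by omega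
      have : (4:ℝ) * ((n₁:ℝ) + i) ≤ 3 * n := by exact_mod_cast h4
      linarith
    have hfrac0 : (0:ℝ) ≤ ((n₁ : ℝ) + i) / n := by positivity
    have hexp0 : (0:ℝ) ≤ 6 * ((i : ℝ) * Real.log i + 1) := by
      have := Real.log_natCast_nonneg i
      positivity
    exact Real.rpow_le_rpow hfrac0 hfrac hexp0
  refine step1.trans ?_
  set g : ℕ → ℝ := fun i => ((3:ℝ)/4) ^ (6 * ((i : ℝ) * Real.log i + 1)) with hg
  have hg0 : ∀ i, 0 ≤ g i := fun i => Real.rpow_nonneg (by norm_num) _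
  have hM : ∑ i ∈ Finset.range N, g i ≤ ∑ i ∈ Finset.range (max N 2), g i := by
    apply Finset.sum_le_sum_of_subset_of_nonneg
    · exact Finset.range_subset_range.mpr (le_max_left _ _)
    · intro i _ _; exact hg0 i
  refine hM.trans ?_
  set M := max N 2 with hMdef
  have h2M : 2 ≤ M := le_max_right _ _
  rw [← Finset.sum_range_add_sum_Ico g h2M]
  have hsmall : ∑ i ∈ Finset.range 2, g i = 2 * (3/4:ℝ)^(6:ℕ) := by
    rw [Finset.sum_range_succ, Finset.sum_range_one]
    simp only [hg, Nat.cast_zero, Nat.cast_one, Real.log_one, Real.log_zero]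
    norm_num [e6]
  have htail : ∑ i ∈ Finset.Ico 2 M, g i ≤ (3/4:ℝ)^(6:ℕ) * (1/6) := by
    have h1 : ∑ i ∈ Finset.Ico 2 M, g i ≤
        ∑ i ∈ Finset.Ico 2 M, (3/4:ℝ)^(6:ℕ) * (1/3:ℝ)^i := by
      apply Finset.sum_le_sum
      intro i hi
      exact g_bound i (Finset.mem_Ico.mp hi).1
    refine h1.trans ?_
    rw [← Finset.mul_sum]
    apply mul_le_mul_of_nonneg_left _ (by positivity)
    have e1 : ∑ i ∈ Finset.Ico 2 M, (1/3:ℝ)^i =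
        ∑ j ∈ Finset.range (M - 2), (1/3:ℝ)^(2 + j) := by
      rw [Finset.sum_Ico_eq_sum_range]
    rw [e1]
    have e2 : ∑ j ∈ Finset.range (M - 2), (1/3:ℝ)^(2 + j) =
        (1/9) * ∑ j ∈ Finset.range (M - 2), (1/3:ℝ)^j := by
      rw [Finset.mul_sum]
      apply Finset.sum_congr rfl
      intro j _
      rw [pow_add]
      norm_num
    rw [e2]
    have hgeom : ∑ j ∈ Finset.range (M - 2), (1/3:ℝ)^j ≤ 3/2 := by
      rw [geom_sum_eq (show (1/3:ℝ) ≠ 1 by norm_num) (M - 2)]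
      have hp : (0:ℝ) ≤ (1/3:ℝ)^(M-2) := by positivity
      rw [div_le_iff_of_neg (by norm_num : (1/3:ℝ) - 1 < 0)]
      linarith
    linarith
  have hval : (3/4:ℝ)^(6:ℕ) = 729/4096 := by norm_num
  rw [hsmall]
  nlinarith [htail]
end

section
/- Let n, n₀, n₁ be natural numbers with n = n₀ + n₁, 2·n₀ ≥ n and n₀ ≥ 1. Then ∑_{i=⌈n₀/2⌉}^{n₀-1} ((n₁ + i)/n)^(6·(i·ln i + 1)) ≤ (n₀/2) · ((n-1)/n)^(6·((n/4)·ln(n/4) + 1)). -/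
theorem stmt_16 (n n₀ n₁ : ℕ) (hsum : n = n₀ + n₁) (h0 : n ≤ 2 * n₀) (h1 : 1 ≤ n₀) :
    ∑ i ∈ Finset.Icc ((n₀ + 1) / 2) (n₀ - 1),
        ((((n₁ : ℝ) + i) / n) ^ (6 * ((i : ℝ) * Real.log i + 1)) : ℝ)
      ≤ ((n₀ : ℝ) / 2)
        * ((((n : ℝ) - 1) / n) ^ (6 * (((n : ℝ) / 4) * Real.log ((n : ℝ) / 4) + 1)) : ℝ) := by
  set e : ℝ := 6 * (((n : ℝ) / 4) * Real.log ((n : ℝ) / 4) + 1) with he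
  set c : ℝ := ((n : ℝ) - 1) / n with hc
  by_cases hn1 : n₀ = 1
  · subst hn1
    simp only [show (1 + 1) / 2 = 1 from rfl, show 1 - 1 = 0 from rfl]
    rw [Finset.Icc_eq_empty (by norm_num), Finset.sum_empty]
    apply mul_nonneg (by norm_num)
    apply Real.rpow_nonneg
    rw [hc]
    apply div_nonneg _ (by positivity)
    have : (1 : ℝ) ≤ n := by
      have : 1 ≤ n := by omega
      exact_mod_cast this
    linarith
  · have hn2 : 2 ≤ n₀ := by omega
    have hn : 2 ≤ n := by omega
    have hnR : (2 : ℝ) ≤ n := by exact_mod_cast hn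
    have hc0 : 0 < c := by rw [hc]; apply div_pos (by linarith) (by linarith)
    have hc1 : c ≤ 1 := by rw [hc, div_le_one (by linarith)]; linarith
    have key : ∀ i ∈ Finset.Icc ((n₀ + 1) / 2) (n₀ - 1),
        ((((n₁ : ℝ) + i) / n) ^ (6 * ((i : ℝ) * Real.log i + 1)) : ℝ) ≤ c ^ e := by
      intro i hi
      rw [Finset.mem_Icc] at hi
      obtain ⟨hil, hir⟩ := hi
      have hi1 : 1 ≤ i := by omega
      have hi1R : (1 : ℝ) ≤ i := by exact_mod_cast hi1
      have hn4i : (n : ℝ) / 4 ≤ i := by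
        have : n ≤ 4 * i := by omega
        have : (n : ℝ) ≤ 4 * i := by exact_mod_cast this
        linarith
      have hef : e ≤ 6 * ((i : ℝ) * Real.log i + 1) := by
        have hlog : ((n : ℝ) / 4) * Real.log ((n : ℝ) / 4) ≤ (i : ℝ) * Real.log i := by
          by_cases h4 : (n : ℝ) / 4 ≤ 1
          · have h1 : Real.log ((n : ℝ) / 4) ≤ 0 := Real.log_nonpos (by positivity) h4
            have h2 : 0 ≤ (i : ℝ) * Real.log i :=
              mul_nonneg (by positivity) (Real.log_nonneg hi1R)
            nlinarith [mul_nonneg (show (0:ℝ) ≤ (n:ℝ)/4 by positivity) (neg_nonneg.mpr h1)]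
          · push_neg at h4
            have h1 : 0 ≤ Real.log ((n : ℝ) / 4) := Real.log_nonneg h4.le
            have h2 : Real.log ((n : ℝ) / 4) ≤ Real.log i :=
              Real.log_le_log (by linarith) hn4i
            nlinarith
        linarith
      have hf0 : 0 ≤ 6 * ((i : ℝ) * Real.log i + 1) := by
        have : 0 ≤ (i : ℝ) * Real.log i := mul_nonneg (by positivity) (Real.log_nonneg hi1R)
        linarith
      have hb0 : 0 ≤ ((n₁ : ℝ) + i) / n := by positivity
      have hbc : ((n₁ : ℝ) + i) / n ≤ c := by
        rw [hc]
        apply div_le_div_of_nonneg_right _ (by linarith)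
        have : n₁ + i ≤ n - 1 := by omega
        have : (n₁ + i : ℕ) ≤ (n - 1 : ℕ) := this
        have h' : ((n₁ + i : ℕ) : ℝ) ≤ ((n - 1 : ℕ) : ℝ) := by exact_mod_cast this
        push_cast at h'
        rw [Nat.cast_sub (by omega)] at h' <;> push_cast at h' ⊢ <;> linarith
      calc ((((n₁ : ℝ) + i) / n) ^ (6 * ((i : ℝ) * Real.log i + 1)) : ℝ)
          ≤ c ^ (6 * ((i : ℝ) * Real.log i + 1)) := Real.rpow_le_rpow hb0 hbc hf0
        _ ≤ c ^ e := Real.rpow_le_rpow_of_exponent_ge hc0 hc1 hef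
    calc ∑ i ∈ Finset.Icc ((n₀ + 1) / 2) (n₀ - 1),
          ((((n₁ : ℝ) + i) / n) ^ (6 * ((i : ℝ) * Real.log i + 1)) : ℝ)
        ≤ (Finset.Icc ((n₀ + 1) / 2) (n₀ - 1)).card • (c ^ e) :=
          Finset.sum_le_card_nsmul _ _ _ key
      _ ≤ ((n₀ : ℝ) / 2) * c ^ e := by
          rw [nsmul_eq_mul]
          apply mul_le_mul_of_nonneg_right _ (Real.rpow_nonneg hc0.le _)
          rw [Nat.card_Icc]
          have hcard : 2 * ((n₀ - 1 + 1) - (n₀ + 1) / 2) ≤ n₀ := by omega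
          have : ((n₀ - 1 + 1 - (n₀ + 1) / 2 : ℕ) : ℝ) ≤ (n₀ : ℝ) / 2 := by
            rw [le_div_iff₀ (by norm_num)]
            have h' : ((n₀ - 1 + 1 - (n₀ + 1) / 2 : ℕ) : ℝ) * 2 ≤ ((2 * (n₀ - 1 + 1 - (n₀ + 1) / 2) : ℕ) : ℝ) := by
              push_cast; ring_nf; rfl
            have h'' : ((2 * (n₀ - 1 + 1 - (n₀ + 1) / 2) : ℕ) : ℝ) ≤ (n₀ : ℝ) := by exact_mod_cast hcard
            linarith
          exact this
end
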